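/- Let V be an (n+1)-dimensional vector space over a field k, E = ⋀V its exterior algebra (graded with V in degree 1), P₀ a finite-dimensional k-vector space, l ≥ 1, and P = P₀ ⊗ (⊕_{i=0}^{l} ⋀^i V) the graded E-module with the obvious E-action. Let L ⊆ P₀ ⊗ ⋀^l V be a subspace that anchors P₀ (i.e., any φ ∈ End(P₀) with (φ ⊗ id)(L) ⊆ L is scalar). Then every degree-0 graded E-module endomorphism of P/L is a scalar multiple of the identity. -/

import Mathlib

/-- Left wedge multiplication by v, as a linear map ⋀^i V → ⋀^(i+1) V. -/
noncomputable def wedgeMap (k V : Type*) [Field k] [AddCommGroup V] [Module k V]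
    (i : ℕ) (v : V) : ⋀[k]^i V →ₗ[k] ⋀[k]^(i+1) V :=
  LinearMap.codRestrict (⋀[k]^(i+1) V)
    ((LinearMap.mulLeft k (ExteriorAlgebra.ι k v)).comp (Submodule.subtype (⋀[k]^i V)))
    (fun x => by
      show ExteriorAlgebra.ι k v * (x : ExteriorAlgebra k V) ∈ _
      rw [show (⋀[k]^(i+1) V : Submodule k (ExteriorAlgebra k V)) =
        (LinearMap.range (ExteriorAlgebra.ι k : V →ₗ[k] ExteriorAlgebra k V)) ^ (i+1) from rfl,
        pow_succ']
      exact Submodule.mul_mem_mul (LinearMap.mem_range_self _ v) x.2)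

/-- The action of v ∈ V on the degree-i piece P₀ ⊗ ⋀^i V of P = P₀ ⊗ (⊕ ⋀^i V),
given by id ⊗ (wedge multiplication by v). -/
noncomputable def muMap (k V P₀ : Type*) [Field k] [AddCommGroup V] [Module k V]
    [AddCommGroup P₀] [Module k P₀] (i : ℕ) (v : V) :
    TensorProduct k P₀ (⋀[k]^i V) →ₗ[k] TensorProduct k P₀ (⋀[k]^(i+1) V) :=
  LinearMap.lTensor P₀ (wedgeMap k V i v)

section Aux

variable {k V P₀ : Type*} [Field k] [AddCommGroup V] [Module k V]
  [AddCommGroup P₀] [Module k P₀]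

lemma mu_sup (i : ℕ) :
    (⨆ v : V, LinearMap.range (muMap k V P₀ i v)) = ⊤ := by
  rw [eq_top_iff]
  rintro x -
  induction x using TensorProduct.induction_on with
  | zero => exact zero_mem _
  | add x y hx hy => exact add_mem hx hy
  | tmul p w =>
    obtain ⟨w, hw⟩ := w
    have hw' : w ∈ LinearMap.range (ExteriorAlgebra.ι k : V →ₗ[k] ExteriorAlgebra k V) *
        (⋀[k]^i V : Submodule k (ExteriorAlgebra k V)) := by
      have h2 := hw
      rw [show (⋀[k]^(i+1) V : Submodule k (ExteriorAlgebra k V)) =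
        (LinearMap.range (ExteriorAlgebra.ι k : V →ₗ[k] ExteriorAlgebra k V)) ^ (i+1) from rfl,
        pow_succ'] at h2
      exact h2
    have key : ∃ h : w ∈ (⋀[k]^(i+1) V : Submodule k (ExteriorAlgebra k V)),
        p ⊗ₜ[k] (⟨w, h⟩ : ⋀[k]^(i+1) V) ∈ ⨆ v : V, LinearMap.range (muMap k V P₀ i v) := by
      refine Submodule.mul_induction_on hw' ?_ ?_
      · rintro m ⟨v, rfl⟩ n hn
        have hmem := (wedgeMap k V i v ⟨n, hn⟩).2
        refine ⟨hmem, ?_⟩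
        have h1 : (⟨ExteriorAlgebra.ι k v * n, hmem⟩ : ⋀[k]^(i+1) V) =
            wedgeMap k V i v ⟨n, hn⟩ := Subtype.ext rfl
        rw [h1]
        have h2 : p ⊗ₜ[k] (wedgeMap k V i v ⟨n, hn⟩) =
            muMap k V P₀ i v (p ⊗ₜ ⟨n, hn⟩) := rfl
        rw [h2]
        exact Submodule.mem_iSup_of_mem v (LinearMap.mem_range_self _ _)
      · rintro x y ⟨hx, Hx⟩ ⟨hy, Hy⟩
        refine ⟨add_mem hx hy, ?_⟩
        have h1 : (⟨x + y, add_mem hx hy⟩ : ⋀[k]^(i+1) V) = ⟨x, hx⟩ + ⟨y, hy⟩ := rfl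
        rw [h1, TensorProduct.tmul_add]
        exact add_mem Hx Hy
    obtain ⟨h, H⟩ := key
    exact H

lemma ext_mu {M : Type*} [AddCommGroup M] [Module k M] (i : ℕ)
    (f g : TensorProduct k P₀ (⋀[k]^(i+1) V) →ₗ[k] M)
    (h : ∀ v : V, f ∘ₗ muMap k V P₀ i v = g ∘ₗ muMap k V P₀ i v) : f = g := by
  apply LinearMap.ext
  intro x
  have hx : x ∈ ⨆ v : V, LinearMap.range (muMap k V P₀ i v) := by
    rw [mu_sup]; trivial
  refine Submodule.iSup_induction (motive := fun y => f y = g y) _ hx ?_ (by simp) ?_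
  · rintro v y ⟨z, rfl⟩
    exact LinearMap.congr_fun (h v) z
  · intro x y hx hy
    simp [map_add, hx, hy]

end Aux

/-- Let V be (n+1)-dimensional, l = c + 1 ≥ 1, P = P₀ ⊗ (⊕_{i=0}^{l} ⋀^i V) the
truncated graded ⋀V-module, and L ⊆ P₀ ⊗ ⋀^l V a subspace anchoring P₀ (any
endomorphism φ of P₀ with (φ ⊗ id)(L) ⊆ L is scalar).  The quotient P/L is modelled
by the components ψ i (i ≤ c) together with ψtop acting on a model Q of
(P₀ ⊗ ⋀^l V)/L, i.e. Q is the target of a surjection π with kernel L.  Then every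
degree-0 graded ⋀V-module endomorphism of P/L (a family commuting with the action of
every v ∈ V) is a scalar multiple of the identity. -/
theorem stmt10 (k V P₀ Q : Type*) [Field k] [AddCommGroup V] [Module k V]
    [FiniteDimensional k V] [AddCommGroup P₀] [Module k P₀] [FiniteDimensional k P₀]
    [AddCommGroup Q] [Module k Q]
    (n : ℕ) (hV : Module.finrank k V = n + 1) (c : ℕ)
    (L : Submodule k (TensorProduct k P₀ (⋀[k]^(c + 1) V)))
    (hL : ∀ φ : Module.End k P₀,
      (∀ x ∈ L, LinearMap.rTensor (⋀[k]^(c + 1) V) φ x ∈ L) →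
        ∃ a : k, φ = a • (1 : Module.End k P₀))
    (π : TensorProduct k P₀ (⋀[k]^(c + 1) V) →ₗ[k] Q)
    (hπ : Function.Surjective π) (hker : LinearMap.ker π = L)
    (ψ : (i : ℕ) → TensorProduct k P₀ (⋀[k]^i V) →ₗ[k] TensorProduct k P₀ (⋀[k]^i V))
    (ψtop : Q →ₗ[k] Q)
    (hcomm : ∀ (v : V) (i : ℕ), i < c →
      ψ (i + 1) ∘ₗ muMap k V P₀ i v = muMap k V P₀ i v ∘ₗ ψ i)
    (hcommtop : ∀ v : V,
      ψtop ∘ₗ (π ∘ₗ muMap k V P₀ c v) = (π ∘ₗ muMap k V P₀ c v) ∘ₗ ψ c) :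
    ∃ a : k, (∀ i : ℕ, i ≤ c → ψ i = a • LinearMap.id) ∧ ψtop = a • LinearMap.id := by
  classical
  -- the unit of the exterior algebra lies in ⋀^0
  have h1mem : (1 : ExteriorAlgebra k V) ∈ (⋀[k]^0 V : Submodule k (ExteriorAlgebra k V)) := by
    rw [show (⋀[k]^0 V : Submodule k (ExteriorAlgebra k V)) =
      (LinearMap.range (ExteriorAlgebra.ι k : V →ₗ[k] ExteriorAlgebra k V)) ^ 0 from rfl,
      pow_zero]
    exact Submodule.mem_one.mpr ⟨1, map_one _⟩
  set u : (⋀[k]^0 V : Submodule k (ExteriorAlgebra k V)) := ⟨1, h1mem⟩ with hu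
  -- k ≃ₗ ⋀^0 V
  have hbij : Function.Bijective (LinearMap.toSpanSingleton k (⋀[k]^0 V) u) := by
    constructor
    · intro a b hab
      have h1 : a • (1 : ExteriorAlgebra k V) = b • 1 := congrArg Subtype.val hab
      have h2 : (a - b) • (1 : ExteriorAlgebra k V) = 0 := by
        rw [sub_smul, h1, sub_self]
      rcases smul_eq_zero.mp h2 with h | h
      · exact sub_eq_zero.mp h
      · exact absurd h one_ne_zero
    · rintro ⟨w, hw⟩
      have hw' := hw
      rw [show (⋀[k]^0 V : Submodule k (ExteriorAlgebra k V)) =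
        (LinearMap.range (ExteriorAlgebra.ι k : V →ₗ[k] ExteriorAlgebra k V)) ^ 0 from rfl,
        pow_zero] at hw'
      obtain ⟨a, ha⟩ := Submodule.mem_one.mp hw'
      refine ⟨a, Subtype.ext ?_⟩
      show a • ((1 : ExteriorAlgebra k V)) = w
      rw [← Algebra.algebraMap_eq_smul_one, ha]
  set e0 : k ≃ₗ[k] (⋀[k]^0 V : Submodule k (ExteriorAlgebra k V)) :=
    LinearEquiv.ofBijective _ hbij with he0
  have he0one : e0 1 = u := by
    show LinearMap.toSpanSingleton k (⋀[k]^0 V) u 1 = u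
    simp
  set e : TensorProduct k P₀ (⋀[k]^0 V) ≃ₗ[k] P₀ :=
    (LinearEquiv.lTensor P₀ e0.symm).trans (TensorProduct.rid k P₀) with he
  have hesymm : ∀ p : P₀, e.symm p = p ⊗ₜ u := by
    intro p
    show (LinearEquiv.lTensor P₀ e0) ((TensorProduct.rid k P₀).symm p) = p ⊗ₜ u
    rw [TensorProduct.rid_symm_apply]
    simp [LinearEquiv.lTensor_tmul, he0one]
  set φ : Module.End k P₀ := e.toLinearMap ∘ₗ ψ 0 ∘ₗ e.symm.toLinearMap with hφ
  -- ψ 0 = rTensor φ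
  have hψ0 : ψ 0 = LinearMap.rTensor (⋀[k]^0 V) φ := by
    apply TensorProduct.ext'
    intro p w
    -- write w = a • u
    obtain ⟨a, rfl⟩ : ∃ a : k, w = a • u := by
      obtain ⟨a, ha⟩ := hbij.2 w
      exact ⟨a, by rw [← ha]; simp [LinearMap.toSpanSingleton_apply]⟩
    have base : ψ 0 (p ⊗ₜ u) = LinearMap.rTensor (⋀[k]^0 V) φ (p ⊗ₜ u) := by
      have h1 : φ p = e (ψ 0 (p ⊗ₜ u)) := by
        simp [hφ, hesymm p]
      have h2 : ψ 0 (p ⊗ₜ u) = e.symm (φ p) := by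
        rw [h1, LinearEquiv.symm_apply_apply]
      rw [h2, hesymm, LinearMap.rTensor_tmul]
    calc ψ 0 (p ⊗ₜ (a • u)) = a • ψ 0 (p ⊗ₜ u) := by
          rw [TensorProduct.tmul_smul, map_smul]
      _ = a • LinearMap.rTensor (⋀[k]^0 V) φ (p ⊗ₜ u) := by rw [base]
      _ = LinearMap.rTensor (⋀[k]^0 V) φ (p ⊗ₜ (a • u)) := by
          rw [TensorProduct.tmul_smul, map_smul]
  -- ψ i = rTensor φ for all i ≤ c
  have hψ : ∀ i, i ≤ c → ψ i = LinearMap.rTensor (⋀[k]^i V) φ := by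
    intro i
    induction i with
    | zero => intro _; exact hψ0
    | succ i ih =>
      intro hic
      have hic' : i < c := hic
      refine ext_mu (M := TensorProduct k P₀ (⋀[k]^(i+1) V)) i (ψ (i+1)) (LinearMap.rTensor (⋀[k]^(i+1) V) φ) fun v => ?_
      rw [hcomm v i hic', ih (le_of_lt hic')]
      rw [show muMap k V P₀ i v = LinearMap.lTensor P₀ (wedgeMap k V i v) from rfl,
        LinearMap.lTensor_comp_rTensor, LinearMap.rTensor_comp_lTensor]
  -- ψtop ∘ π = π ∘ rTensor φ
  have htop : ψtop ∘ₗ π = π ∘ₗ LinearMap.rTensor (⋀[k]^(c+1) V) φ := by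
    refine ext_mu (M := Q) c (ψtop ∘ₗ π) (π ∘ₗ LinearMap.rTensor (⋀[k]^(c+1) V) φ) fun v => ?_
    have h1 := hcommtop v
    rw [LinearMap.comp_assoc] at h1 ⊢
    rw [h1, hψ c le_rfl, LinearMap.comp_assoc,
      show muMap k V P₀ c v = LinearMap.lTensor P₀ (wedgeMap k V c v) from rfl,
      LinearMap.lTensor_comp_rTensor, LinearMap.rTensor_comp_lTensor]
  -- φ preserves L, hence is scalar
  have hLstable : ∀ x ∈ L, LinearMap.rTensor (⋀[k]^(c+1) V) φ x ∈ L := by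
    intro x hx
    rw [← hker, LinearMap.mem_ker]
    have : π (LinearMap.rTensor (⋀[k]^(c+1) V) φ x) = ψtop (π x) :=
      (LinearMap.congr_fun htop x).symm
    rw [this, show π x = 0 from by rw [← LinearMap.mem_ker, hker]; exact hx, map_zero]
  obtain ⟨a, ha⟩ := hL φ hLstable
  have hrT : ∀ i : ℕ, LinearMap.rTensor (⋀[k]^i V) φ =
      (a • LinearMap.id : TensorProduct k P₀ (⋀[k]^i V) →ₗ[k] _) := by
    intro i
    apply TensorProduct.ext'
    intro p w
    have : φ p = a • p := by rw [ha]; rfl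
    simp [LinearMap.rTensor_tmul, this, TensorProduct.smul_tmul']
  refine ⟨a, ?_, ?_⟩
  · intro i hi
    rw [hψ i hi, hrT]
  · ext q
    obtain ⟨x, rfl⟩ := hπ q
    have := LinearMap.congr_fun htop x
    simp only [LinearMap.comp_apply] at this
    rw [this, hrT, LinearMap.smul_apply, LinearMap.id_apply, map_smul]
    rfl
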